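/- Let a, b ≥ 0 be real numbers and let f : ℝ² → ℝ be differentiable and Lebesgue integrable with ‖∇f(x)‖ ≤ a + b‖x‖ for all x ∈ ℝ², where ‖·‖ is the Euclidean norm. Then for every Δ > 0 and every finite set S ⊆ ℤ², Σ_{n ∈ S} [ Δ²·|f(Δ·n)| − (Δ³/√2)·(a + b·Δ·‖n‖) − (b/2)·Δ⁴ ] ≤ ∫_{ℝ²} |f(x)| dx. -/

import Mathlib

/-!
Each point of the grid cell of side `Δ` centred at `Δn` lies within `Δ/√2` of the centre, and on
that ball the gradient is at most `a + b (‖Δn‖ + Δ/√2)`. The mean value theorem therefore bounds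
`|f|` from below on the cell by `|f(Δn)| - (a + b‖Δn‖) Δ/√2 - b Δ²/2`; integrating over the cell,
of area `Δ²`, and summing over the pairwise disjoint cells gives at most `∫ |f|`.
-/

open MeasureTheory

/-- The grid point `Δ·n ∈ ℝ²` associated with an integer pair `n ∈ ℤ²`. -/
noncomputable def gridPt (Δ : ℝ) (n : Fin 2 → ℤ) : EuclideanSpace ℝ (Fin 2) :=
  WithLp.toLp 2 (fun i => Δ * (n i : ℝ))

/-- The integer pair `n ∈ ℤ²` viewed as a point of `ℝ²`. -/
noncomputable def intPt (n : Fin 2 → ℤ) : EuclideanSpace ℝ (Fin 2) :=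
  WithLp.toLp 2 (fun i => (n i : ℝ))

lemma norm_gradient_eq_norm_fderiv {F : Type*} [NormedAddCommGroup F] [InnerProductSpace ℝ F]
    [CompleteSpace F] (f : F → ℝ) (x : F) : ‖gradient f x‖ = ‖fderiv ℝ f x‖ :=
  (InnerProductSpace.toDual ℝ F).symm.norm_map _

lemma norm_sub_le_of_norm_fderiv_le_affine {E F : Type*} [NormedAddCommGroup E] [NormedSpace ℝ E]
    [NormedAddCommGroup F] [NormedSpace ℝ F] {f : E → F} {a b r : ℝ} (hf : Differentiable ℝ f)
    (hb : 0 ≤ b) (hf' : ∀ y, ‖fderiv ℝ f y‖ ≤ a + b * ‖y‖) {x₀ x : E} (hx : ‖x - x₀‖ ≤ r) :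
    ‖f x - f x₀‖ ≤ (a + b * ‖x₀‖) * r + b * r ^ 2 := by
  set C := a + b * (‖x₀‖ + r)
  have hbound : ∀ y ∈ Metric.closedBall x₀ r, ‖fderiv ℝ f y‖ ≤ C := fun y hy => by
    have : ‖y‖ ≤ ‖x₀‖ + r := norm_le_norm_add_const_of_dist_le hy
    exact (hf' y).trans (by simp only [C]; gcongr)
  have hr : 0 ≤ r := (norm_nonneg _).trans hx
  have hx₀ : x₀ ∈ Metric.closedBall x₀ r := Metric.mem_closedBall_self hr
  have hC : 0 ≤ C := (norm_nonneg _).trans (hbound x₀ hx₀)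
  calc ‖f x - f x₀‖ ≤ C * ‖x - x₀‖ :=
        (convex_closedBall x₀ r).norm_image_sub_le_of_norm_fderiv_le
          (fun y _ => hf y) hbound hx₀ (by rwa [Metric.mem_closedBall, dist_eq_norm])
    _ ≤ C * r := by gcongr
    _ = (a + b * ‖x₀‖) * r + b * r ^ 2 := by ring

section GridCell

variable {ι : Type*}

def gridCenter (Δ : ℝ) (n : ι → ℤ) : EuclideanSpace ℝ ι :=
  WithLp.toLp 2 fun i => Δ * n i

def gridCell (Δ : ℝ) (n : ι → ℤ) : Set (EuclideanSpace ℝ ι) :=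
  WithLp.ofLp ⁻¹' Set.univ.pi fun i => Set.Ico (Δ * n i - Δ / 2) (Δ * n i + Δ / 2)

lemma measurableSet_gridCell [Fintype ι] (Δ : ℝ) (n : ι → ℤ) : MeasurableSet (gridCell Δ n) :=
  (PiLp.volume_preserving_ofLp ι).measurable (.univ_pi fun _ => measurableSet_Ico)

lemma volume_gridCell [Fintype ι] {Δ : ℝ} (hΔ : 0 ≤ Δ) (n : ι → ℤ) :
    volume (gridCell Δ n) = ENNReal.ofReal (Δ ^ Fintype.card ι) := by
  rw [gridCell, (PiLp.volume_preserving_ofLp ι).measure_preimage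
    (MeasurableSet.univ_pi fun _ => measurableSet_Ico).nullMeasurableSet, volume_pi_pi]
  simp only [Real.volume_Ico, show ∀ c : ℝ, c + Δ / 2 - (c - Δ / 2) = Δ from fun c => by ring,
    Finset.prod_const, Finset.card_univ, ENNReal.ofReal_pow hΔ]

lemma pairwise_disjoint_gridCell (Δ : ℝ) :
    Pairwise (Function.onFun Disjoint (gridCell (ι := ι) Δ)) := by
  intro m n hmn
  obtain ⟨i, hi⟩ := Function.ne_iff.mp hmn
  refine .preimage _ (Set.disjoint_univ_pi.mpr ⟨i, ?_⟩)
  have hIco (k : ℤ) : Set.Ico (Δ * k - Δ / 2) (Δ * k + Δ / 2) =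
      Set.Ico (-(Δ / 2) + k • Δ) (-(Δ / 2) + (k + 1) • Δ) := by
    simp only [zsmul_eq_mul, Int.cast_add, Int.cast_one]
    congr 1 <;> ring
  simpa only [hIco] using Set.pairwise_disjoint_Ico_add_zsmul (-(Δ / 2)) Δ hi

lemma norm_sub_le_of_mem_gridCell [Fintype ι] {Δ : ℝ} (hΔ : 0 ≤ Δ) {n : ι → ℤ}
    {x : EuclideanSpace ℝ ι} (hx : x ∈ gridCell Δ n) :
    ‖x - gridCenter Δ n‖ ≤ Δ * √(Fintype.card ι) / 2 := by
  have hcoord (i : ι) : |x i - Δ * n i| ≤ Δ / 2 := by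
    have := hx i (Set.mem_univ i)
    rw [Set.mem_Ico] at this
    exact abs_le.mpr ⟨by linarith, by linarith⟩
  calc ‖x - gridCenter Δ n‖ = √(∑ i, |x i - Δ * n i| ^ 2) := by
        simp [EuclideanSpace.norm_eq, gridCenter]
    _ ≤ √(∑ _ : ι, (Δ / 2) ^ 2) := by gcongr with i; exact hcoord i
    _ = Δ * √(Fintype.card ι) / 2 := by
        rw [Finset.sum_const, Finset.card_univ, nsmul_eq_mul, Real.sqrt_mul (by positivity),
          Real.sqrt_sq (by positivity)]
        ring

lemma le_setIntegral_abs_gridCell [Fintype ι] {f : EuclideanSpace ℝ ι → ℝ} {a b Δ : ℝ}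
    (hf : Differentiable ℝ f) (hfi : Integrable f) (hb : 0 ≤ b)
    (hf' : ∀ y, ‖fderiv ℝ f y‖ ≤ a + b * ‖y‖) (hΔ : 0 ≤ Δ) (n : ι → ℤ) :
    Δ ^ Fintype.card ι * (|f (gridCenter Δ n)|
        - ((a + b * ‖gridCenter Δ n‖) * (Δ * √(Fintype.card ι) / 2)
          + b * (Δ * √(Fintype.card ι) / 2) ^ 2)) ≤
      ∫ x in gridCell Δ n, |f x| := by
  set x₀ := gridCenter Δ n
  set ρ := Δ * √(Fintype.card ι) / 2
  have hlow : ∀ x ∈ gridCell Δ n, |f x₀| - ((a + b * ‖x₀‖) * ρ + b * ρ ^ 2) ≤ |f x| :=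
    fun x hx => by
      have := norm_sub_le_of_norm_fderiv_le_affine (x₀ := x₀) (r := ρ) hf hb hf'
        (norm_sub_le_of_mem_gridCell hΔ hx)
      rw [Real.norm_eq_abs, abs_sub_comm] at this
      linarith [abs_sub_abs_le_abs_sub (f x₀) (f x)]
  have hvol := volume_gridCell hΔ n
  have := setIntegral_ge_of_const_le_real (measurableSet_gridCell Δ n)
    (hvol ▸ ENNReal.ofReal_ne_top) hlow hfi.abs.integrableOn
  rwa [measureReal_def, hvol, ENNReal.toReal_ofReal (by positivity), mul_comm] at this

end GridCell

lemma sum_setIntegral_le_integral {X κ : Type*} [MeasurableSpace X] {μ : Measure X} {g : X → ℝ}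
    (hg : Integrable g μ) (hg₀ : 0 ≤ g) {s : κ → Set X} (hs : ∀ k, MeasurableSet (s k))
    (hdisj : Pairwise (Function.onFun Disjoint s)) (S : Finset κ) :
    ∑ k ∈ S, ∫ x in s k, g x ∂μ ≤ ∫ x, g x ∂μ := by
  rw [← integral_biUnion_finset S (fun k _ => hs k) (hdisj.set_pairwise _)
    (fun _ _ => hg.integrableOn)]
  exact setIntegral_le_integral hg (.of_forall hg₀)

lemma norm_gridPt {Δ : ℝ} (hΔ : 0 ≤ Δ) (n : Fin 2 → ℤ) : ‖gridPt Δ n‖ = Δ * ‖intPt n‖ := by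
  rw [show gridPt Δ n = Δ • intPt n from rfl, norm_smul, Real.norm_of_nonneg hΔ]

theorem stmt14_general (a b : ℝ) (hb : 0 ≤ b)
    (f : EuclideanSpace ℝ (Fin 2) → ℝ) (hf : Differentiable ℝ f)
    (hfi : Integrable f)
    (hgrad : ∀ x, ‖gradient f x‖ ≤ a + b * ‖x‖)
    (Δ : ℝ) (hΔ : 0 < Δ) (S : Finset (Fin 2 → ℤ)) :
    ∑ n ∈ S, (Δ ^ 2 * |f (gridPt Δ n)|
        - (Δ ^ 3 / Real.sqrt 2) * (a + b * (Δ * ‖intPt n‖))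
        - (b / 2) * Δ ^ 4) ≤
      ∫ x, |f x| := by
  have hf' (y) : ‖fderiv ℝ f y‖ ≤ a + b * ‖y‖ := norm_gradient_eq_norm_fderiv f y ▸ hgrad y
  refine (Finset.sum_le_sum fun n _ => ?_).trans <| sum_setIntegral_le_integral hfi.abs
    (fun _ => abs_nonneg _) (measurableSet_gridCell Δ) (pairwise_disjoint_gridCell Δ) S
  refine le_of_eq_of_le ?_ (le_setIntegral_abs_gridCell hf hfi hb hf' hΔ.le n)
  have hsqrt : √2 ^ 2 = 2 := Real.sq_sqrt zero_le_two
  rw [show gridCenter Δ n = gridPt Δ n from rfl, norm_gridPt hΔ.le, Fintype.card_fin,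
    Nat.cast_ofNat]
  field_simp
  linear_combination (2 * Δ * (a + Δ * b * ‖intPt n‖) + Δ ^ 2 * b * √2) * hsqrt

/-- **Paper's Proposition 6 (rigorous grid discretization bound).**
If `f : ℝ² → ℝ` is differentiable and integrable with `‖∇f(x)‖ ≤ a + b‖x‖`, then for
any grid spacing `Δ > 0` and finite `S ⊆ ℤ²`,
`∑_{n ∈ S} [Δ²|f(Δn)| − (Δ³/√2)(a + bΔ‖n‖) − (b/2)Δ⁴] ≤ ∫_{ℝ²} |f|`. -/
theorem stmt14 (a b : ℝ) (ha : 0 ≤ a) (hb : 0 ≤ b)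
    (f : EuclideanSpace ℝ (Fin 2) → ℝ) (hf : Differentiable ℝ f)
    (hfi : Integrable f)
    (hgrad : ∀ x, ‖gradient f x‖ ≤ a + b * ‖x‖)
    (Δ : ℝ) (hΔ : 0 < Δ) (S : Finset (Fin 2 → ℤ)) :
    ∑ n ∈ S, (Δ ^ 2 * |f (gridPt Δ n)|
        - (Δ ^ 3 / Real.sqrt 2) * (a + b * (Δ * ‖intPt n‖))
        - (b / 2) * Δ ^ 4) ≤
      ∫ x, |f x| :=
  stmt14_general a b hb f hf hfi hgrad Δ hΔ S
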